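/- Let f : X → ℝ^d be bounded with sup_x ‖f(x)‖_p ≤ ‖f‖_{p,∞} for some 1 ≤ p ≤ ∞. Let P^π and P̂^π be two Markov transition kernels, and let η_ρ(·;P^π), η_ρ(·;P̂^π) be the corresponding discounted future-state distributions starting from ρ. Then ‖E_{X∼η_ρ(·;P^π)}[f(X)] − E_{X∼η_ρ(·;P̂^π)}[f(X)]‖_p ≤ (γ/(1−γ)) · ‖f‖_{p,∞} · sup_x ‖P^π(·|x) − P̂^π(·|x)‖_TV. -/

import Mathlib

open MeasureTheory ProbabilityTheory
open scoped NNReal ENNReal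

/-- `k`-fold composition of a Markov kernel, `(P^π)^0 = id`. -/
noncomputable def kernelPow {X : Type*} [MeasurableSpace X] (P : Kernel X X) : ℕ → Kernel X X
  | 0 => Kernel.id
  | k + 1 => P ∘ₖ kernelPow P k

/-- The discounted future-state distribution `η_ρ(·;P) = (1−γ) ∑_{k≥0} γ^k (ρ P^k)`. -/
noncomputable def discountedDist {X : Type*} [MeasurableSpace X] (γ : ℝ≥0)
    (ρ : Measure X) (P : Kernel X X) : Measure X :=
  ((1 : ℝ≥0) - γ) • Measure.sum (fun k : ℕ => (γ ^ k : ℝ≥0) • ρ.bind (fun x => kernelPow P k x))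

/-- Total variation distance `‖P − Q‖_TV = 2 sup_A |P(A) − Q(A)|`. -/
noncomputable def tvDist {X : Type*} [MeasurableSpace X] (P Q : Measure X) : ℝ :=
  2 * ⨆ A : {A : Set X // MeasurableSet A}, |(P A.1).toReal - (Q A.1).toReal|

/-! Write `μₖ = ρPᵏ` and `νₖ = ρP̂ᵏ`. Integrating a function bounded by `C` against `P(·|x)` rather
than `P̂(·|x)` changes the result by at most `C ε` (split along a Hahn decomposition of
`P(·|x) - P̂(·|x)`), and integrating against a Markov kernel preserves the bound `C`. Replacing the
transitions one at a time therefore gives `‖∫ f dμₖ - ∫ f dνₖ‖ ≤ k C ε`, and averaging over the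
weights `(1-γ)γᵏ` gives `(1-γ) ∑ₖ k γᵏ = γ/(1-γ)`. -/

section TotalVariation

variable {X E : Type*} [MeasurableSpace X] [NormedAddCommGroup E]

lemma MeasureTheory.StronglyMeasurable.integrable_of_norm_le {μ : Measure X} [IsFiniteMeasure μ]
    {g : X → E} (hg : StronglyMeasurable g) {C : ℝ} (hC : ∀ x, ‖g x‖ ≤ C) : Integrable g μ :=
  .of_bound hg.aestronglyMeasurable C (.of_forall hC)

variable [NormedSpace ℝ E]

lemma two_mul_measureReal_sub_le_tvDist (μ ν : Measure X) [IsFiniteMeasure μ]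
    [IsFiniteMeasure ν] {s : Set X} (hs : MeasurableSet s) :
    2 * (μ.real s - ν.real s) ≤ tvDist μ ν := by
  have hbdd : BddAbove (Set.range fun A : {A : Set X // MeasurableSet A} =>
      |(μ A.1).toReal - (ν A.1).toReal|) := by
    refine ⟨μ.real Set.univ + ν.real Set.univ, ?_⟩
    rintro _ ⟨A, rfl⟩
    exact abs_sub_le_of_nonneg_of_le measureReal_nonneg
      (measureReal_mono (Set.subset_univ _) |>.trans (le_add_of_nonneg_right measureReal_nonneg))
      measureReal_nonneg
      (measureReal_mono (Set.subset_univ _) |>.trans (le_add_of_nonneg_left measureReal_nonneg))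
  unfold tvDist
  gcongr
  exact (le_abs_self _).trans (le_ciSup hbdd ⟨s, hs⟩)

lemma norm_integral_sub_integral_le_of_le {μ ν : Measure X} [IsFiniteMeasure μ] (hνμ : ν ≤ μ)
    {g : X → E} (hg : StronglyMeasurable g) {C : ℝ} (hC : ∀ x, ‖g x‖ ≤ C) :
    ‖∫ x, g x ∂μ - ∫ x, g x ∂ν‖ ≤ C * (μ.real Set.univ - ν.real Set.univ) := by
  have : IsFiniteMeasure ν := isFiniteMeasure_of_le μ hνμ
  have : IsFiniteMeasure (μ - ν) := isFiniteMeasure_of_le μ Measure.sub_le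
  calc ‖∫ x, g x ∂μ - ∫ x, g x ∂ν‖ = ‖∫ x, g x ∂(μ - ν)‖ := by
        conv_lhs => rw [← Measure.sub_add_cancel_of_le hνμ]
        rw [integral_add_measure (hg.integrable_of_norm_le hC) (hg.integrable_of_norm_le hC),
          add_sub_cancel_right]
    _ ≤ C * (μ - ν).real Set.univ := norm_integral_le_of_norm_le_const (.of_forall hC)
    _ = C * (μ.real Set.univ - ν.real Set.univ) := by
        rw [measureReal_def, Measure.sub_apply .univ hνμ,
          ENNReal.toReal_sub_of_le (hνμ _) (measure_ne_top _ _)]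
        rfl

lemma norm_integral_sub_integral_le_mul_tvDist (μ ν : Measure X) [IsProbabilityMeasure μ]
    [IsProbabilityMeasure ν] {g : X → E} (hg : StronglyMeasurable g) {C : ℝ}
    (hC : ∀ x, ‖g x‖ ≤ C) :
    ‖∫ x, g x ∂μ - ∫ x, g x ∂ν‖ ≤ C * tvDist μ ν := by
  have hC0 : 0 ≤ C := (norm_nonneg _).trans (hC (nonempty_of_isProbabilityMeasure μ).some)
  obtain ⟨s, hs, hνμ, hμν⟩ := hahn_decomposition μ ν
  have hle_s : ν.restrict s ≤ μ.restrict s := Measure.le_iff.2 fun t ht => by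
    simpa only [Measure.restrict_apply ht] using hνμ _ (ht.inter hs) Set.inter_subset_right
  have hle_sc : μ.restrict sᶜ ≤ ν.restrict sᶜ := Measure.le_iff.2 fun t ht => by
    simpa only [Measure.restrict_apply ht] using hμν _ (ht.inter hs.compl) Set.inter_subset_right
  have h_s := norm_integral_sub_integral_le_of_le hle_s hg hC
  have h_sc := norm_integral_sub_integral_le_of_le hle_sc hg hC
  simp only [measureReal_restrict_apply_univ] at h_s h_sc
  rw [probReal_compl_eq_one_sub hs, probReal_compl_eq_one_sub hs] at h_sc
  calc ‖∫ x, g x ∂μ - ∫ x, g x ∂ν‖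
      = ‖(∫ x in s, g x ∂μ - ∫ x in s, g x ∂ν) - (∫ x in sᶜ, g x ∂ν - ∫ x in sᶜ, g x ∂μ)‖ := by
        rw [← integral_add_compl hs (hg.integrable_of_norm_le (μ := μ) hC),
          ← integral_add_compl hs (hg.integrable_of_norm_le (μ := ν) hC)]
        congr 1; abel
    _ ≤ C * (2 * (μ.real s - ν.real s)) := by
        refine (norm_sub_le _ _).trans ?_
        linarith
    _ ≤ C * tvDist μ ν :=
        mul_le_mul_of_nonneg_left (two_mul_measureReal_sub_le_tvDist μ ν hs) hC0

end TotalVariation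

section KernelIterates

variable {X E : Type*} [MeasurableSpace X] [NormedAddCommGroup E] [NormedSpace ℝ E]

instance isMarkovKernel_kernelPow (P : Kernel X X) [IsMarkovKernel P] (k : ℕ) :
    IsMarkovKernel (kernelPow P k) := by
  induction k with
  | zero => rw [kernelPow]; infer_instance
  | succ k ih => rw [kernelPow]; infer_instance

lemma kernelPow_zero_comp (P : Kernel X X) (μ : Measure X) : kernelPow P 0 ∘ₘ μ = μ :=
  Measure.id_comp

lemma kernelPow_succ_comp (P : Kernel X X) (μ : Measure X) (k : ℕ) :
    kernelPow P (k + 1) ∘ₘ μ = P ∘ₘ (kernelPow P k ∘ₘ μ) :=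
  Measure.comp_assoc.symm

lemma integral_measure_comp {Y : Type*} [MeasurableSpace Y] {μ : Measure X} {κ : Kernel X Y}
    {g : Y → E} (hg : Integrable g (κ ∘ₘ μ)) :
    ∫ y, g y ∂(κ ∘ₘ μ) = ∫ x, ∫ y, g y ∂κ x ∂μ := by
  rw [Measure.comp_eq_comp_const_apply] at hg ⊢
  exact Kernel.integral_comp hg

lemma norm_integral_le_of_forall_norm_le (μ : Measure X) [IsProbabilityMeasure μ]
    {g : X → E} {C : ℝ} (hC : ∀ x, ‖g x‖ ≤ C) : ‖∫ x, g x ∂μ‖ ≤ C := by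
  simpa using norm_integral_le_of_norm_le_const (μ := μ) (.of_forall hC)

variable (ρ : Measure X) [IsProbabilityMeasure ρ] {P Q : Kernel X X} [IsMarkovKernel P]
  [IsMarkovKernel Q] {ε : ℝ}

lemma norm_integral_comp_sub_integral_comp_le (hε : ∀ x, tvDist (P x) (Q x) ≤ ε) {g : X → E}
    (hg : StronglyMeasurable g) {C : ℝ} (hC : ∀ x, ‖g x‖ ≤ C) :
    ‖∫ x, g x ∂(P ∘ₘ ρ) - ∫ x, g x ∂(Q ∘ₘ ρ)‖ ≤ C * ε := by
  have hC0 : 0 ≤ C := (norm_nonneg _).trans (hC (nonempty_of_isProbabilityMeasure ρ).some)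
  have hPg (x : X) : ‖∫ y, g y ∂P x‖ ≤ C := norm_integral_le_of_forall_norm_le _ hC
  have hQg (x : X) : ‖∫ y, g y ∂Q x‖ ≤ C := norm_integral_le_of_forall_norm_le _ hC
  rw [integral_measure_comp (hg.integrable_of_norm_le hC),
    integral_measure_comp (hg.integrable_of_norm_le hC),
    ← integral_sub (hg.integral_kernel.integrable_of_norm_le hPg)
      (hg.integral_kernel.integrable_of_norm_le hQg)]
  exact norm_integral_le_of_forall_norm_le ρ fun x =>
    (norm_integral_sub_integral_le_mul_tvDist _ _ hg hC).trans
      (mul_le_mul_of_nonneg_left (hε x) hC0)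

lemma norm_integral_kernelPow_comp_sub_le (hε : ∀ x, tvDist (P x) (Q x) ≤ ε) (k : ℕ)
    {g : X → E} (hg : StronglyMeasurable g) {C : ℝ} (hC : ∀ x, ‖g x‖ ≤ C) :
    ‖∫ x, g x ∂(kernelPow P k ∘ₘ ρ) - ∫ x, g x ∂(kernelPow Q k ∘ₘ ρ)‖ ≤ k * (C * ε) := by
  induction k generalizing g with
  | zero => simp [kernelPow_zero_comp]
  | succ k ih =>
    rw [kernelPow_succ_comp, kernelPow_succ_comp]
    calc _ ≤ ‖∫ x, g x ∂(P ∘ₘ (kernelPow P k ∘ₘ ρ)) - ∫ x, g x ∂(P ∘ₘ (kernelPow Q k ∘ₘ ρ))‖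
          + ‖∫ x, g x ∂(P ∘ₘ (kernelPow Q k ∘ₘ ρ)) - ∫ x, g x ∂(Q ∘ₘ (kernelPow Q k ∘ₘ ρ))‖ :=
          norm_sub_le_norm_sub_add_norm_sub _ _ _
      _ ≤ k * (C * ε) + C * ε := by
          refine add_le_add ?_ (norm_integral_comp_sub_integral_comp_le _ hε hg hC)
          rw [integral_measure_comp (hg.integrable_of_norm_le hC),
            integral_measure_comp (hg.integrable_of_norm_le hC)]
          exact ih hg.integral_kernel fun x => norm_integral_le_of_forall_norm_le _ hC
      _ = (k + 1 : ℕ) * (C * ε) := by push_cast; ring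

end KernelIterates

section Discounted

variable {X E : Type*} [MeasurableSpace X] [NormedAddCommGroup E] [NormedSpace ℝ E]

lemma hasSum_integral_discountedDist {γ : ℝ≥0} (hγ : γ < 1) (ρ : Measure X) (P : Kernel X X)
    {g : X → E} (hg : Integrable g (discountedDist γ ρ P)) :
    HasSum (fun k : ℕ => ((1 - γ : ℝ) * γ ^ k) • ∫ x, g x ∂(kernelPow P k ∘ₘ ρ))
      (∫ x, g x ∂(discountedDist γ ρ P)) := by
  have hγ' : ((1 - γ : ℝ≥0) : ℝ≥0∞) ≠ 0 := ENNReal.coe_ne_zero.2 (tsub_pos_of_lt hγ).ne'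
  rw [discountedDist] at hg ⊢
  have hsum := hasSum_integral_measure ((integrable_smul_measure hγ' ENNReal.coe_ne_top).1 hg)
  rw [integral_smul_nnreal_measure, NNReal.smul_def, NNReal.coe_sub hγ.le, NNReal.coe_one]
  convert hsum.const_smul (1 - γ : ℝ) using 2 with k
  rw [integral_smul_nnreal_measure, NNReal.smul_def, smul_smul, NNReal.coe_pow]

lemma hasSum_one_sub_mul_pow_mul_nat {γ : ℝ} (hγ₀ : 0 ≤ γ) (hγ₁ : γ < 1) :
    HasSum (fun k : ℕ => (1 - γ) * γ ^ k * k) (γ / (1 - γ)) := by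
  have h := (hasSum_coe_mul_geometric_of_norm_lt_one
    (by rwa [Real.norm_eq_abs, abs_of_nonneg hγ₀])).mul_left (1 - γ)
  rw [show (1 - γ) * (γ / (1 - γ) ^ 2) = γ / (1 - γ) by field_simp [(sub_pos.2 hγ₁).ne']] at h
  rw [show (fun k : ℕ => (1 - γ) * γ ^ k * k) = fun k : ℕ => (1 - γ) * (k * γ ^ k) from
    funext fun k => by ring]
  exact h

end Discounted

/-- **Perturbation of the discounted future-state distribution (sup-norm version).**
For bounded `f : X → ℝ^d` (with `ℓ_p` norm, `1 ≤ p ≤ ∞`),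
`‖E_{η_ρ(·;P)}[f] − E_{η_ρ(·;P̂)}[f]‖_p ≤ γ/(1−γ) · ‖f‖_{p,∞} · sup_x ‖P(·|x) − P̂(·|x)‖_TV`. -/
theorem discountedDist_expectation_perturbation
    {X : Type*} [MeasurableSpace X] (γ : ℝ≥0) (hγ : γ < 1)
    (ρ : Measure X) [IsProbabilityMeasure ρ]
    (P Phat : Kernel X X) [IsMarkovKernel P] [IsMarkovKernel Phat]
    (d : ℕ) (p : ℝ≥0∞) [Fact (1 ≤ p)]
    (f : X → PiLp p (fun _ : Fin d => ℝ))
    (C : ℝ) (hC : ∀ x, ‖f x‖ ≤ C)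
    (hf₁ : Integrable f (discountedDist γ ρ P))
    (hf₂ : Integrable f (discountedDist γ ρ Phat))
    (ε : ℝ) (hε : ∀ x, tvDist (P x) (Phat x) ≤ ε) :
    ‖∫ x, f x ∂(discountedDist γ ρ P) - ∫ x, f x ∂(discountedDist γ ρ Phat)‖ ≤
      (γ : ℝ) / (1 - γ) * C * ε := by
  have hC₀ : 0 ≤ C := (norm_nonneg _).trans (hC (nonempty_of_isProbabilityMeasure ρ).some)
  obtain ⟨g, hg, hgC, hfg⟩ :=
    (aestronglyMeasurable_add_measure_iff.2 ⟨hf₁.1, hf₂.1⟩).exists_stronglyMeasurable_range_subset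
      Metric.isClosed_closedBall.measurableSet (Metric.nonempty_closedBall.2 hC₀)
      (.of_forall fun x => mem_closedBall_zero_iff.2 (hC x))
  simp only [mem_closedBall_zero_iff] at hgC
  have hfg₁ := hfg.filter_mono (ae_mono (Measure.le_add_right le_rfl))
  have hfg₂ := hfg.filter_mono (ae_mono (Measure.le_add_left le_rfl))
  rw [integral_congr_ae hfg₁, integral_congr_ae hfg₂]
  have hγ₁ : (γ : ℝ) < 1 := hγ
  rw [mul_assoc _ C ε]
  refine ((hasSum_integral_discountedDist hγ ρ P (hf₁.congr hfg₁)).sub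
    (hasSum_integral_discountedDist hγ ρ Phat (hf₂.congr hfg₂))).norm_le_of_bounded
    ((hasSum_one_sub_mul_pow_mul_nat γ.coe_nonneg hγ₁).mul_right (C * ε)) fun k => ?_
  have hcoef : 0 ≤ (1 - γ : ℝ) * γ ^ k := mul_nonneg (sub_nonneg.2 hγ₁.le) (by positivity)
  rw [← smul_sub, norm_smul, Real.norm_of_nonneg hcoef, mul_assoc _ (k : ℝ)]
  exact mul_le_mul_of_nonneg_left (norm_integral_kernelPow_comp_sub_le ρ hε k hg hgC) hcoef
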